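/- For each random context grammar G there is an equivalent random context grammar G' (generating the same language) in which every production (A→x, Per, For) satisfies A∉For. -/

import Mathlib

/-- Symbols: nonterminals `N` plus terminals `T`. -/
abbrev Symb (N T : Type) := N ⊕ T

/-- `alph w` is the set of symbols occurring in the string `w`. -/
def alph {α : Type} (w : List α) : Set α := {a | a ∈ w}

/-- A (nonerasing) random context grammar: finitely many productions
`(A → x, Per, For)` with `A ∈ N`, `x ∈ (N ∪ T)⁺`, `Per, For ⊆ N`. -/
structure RCG (N T : Type) where
  rules : Set (N × List (Symb N T) × Set N × Set N)
  fin : rules.Finite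
  ne : ∀ r ∈ rules, r.2.1 ≠ []
  start : N

/-- One derivation step of a random context grammar.  The flag `incl` tells whether
the rewritten symbol is included in the context check (`true`: conditions checked
against `alph (uAv)`; `false`: against `alph (uv)`). -/
def RCG.Step {N T : Type} (G : RCG N T) (incl : Bool)
    (s₁ s₂ : List (Symb N T)) : Prop :=
  ∃ A x Per For u v, (A, x, Per, For) ∈ G.rules ∧
    s₁ = u ++ Sum.inl A :: v ∧ s₂ = u ++ x ++ v ∧
    (∀ B ∈ Per, Sum.inl B ∈ alph (if incl then s₁ else u ++ v)) ∧
    (∀ B ∈ For, Sum.inl B ∉ alph (if incl then s₁ else u ++ v))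

/-- The language of a random context grammar (under the chosen derivation definition). -/
def RCG.Lang {N T : Type} (G : RCG N T) (incl : Bool) : Set (List T) :=
  {w | Relation.ReflTransGen (G.Step incl) [Sum.inl G.start] (w.map Sum.inr)}

/-- The family of random context languages over terminal alphabet `T`
(standard definition: rewritten symbol excluded from the context check). -/
def RC (T : Type) : Set (Set (List T)) :=
  {L | ∃ (N : Type) (G : RCG N T), G.Lang false = L}

/-- A (nonerasing) semi-conditional grammar of degree (1,1): productions
`(A → x, Per, For)` with `Per, For ⊆ N ∪ T` of cardinality at most one. -/
structure SCG (N T : Type) where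
  rules : Set (N × List (Symb N T) × Set (Symb N T) × Set (Symb N T))
  fin : rules.Finite
  ne : ∀ r ∈ rules, r.2.1 ≠ []
  per1 : ∀ r ∈ rules, r.2.2.1.Subsingleton
  for1 : ∀ r ∈ rules, r.2.2.2.Subsingleton
  start : N

/-- One derivation step of a semi-conditional grammar; `incl` as in `RCG.Step`. -/
def SCG.Step {N T : Type} (G : SCG N T) (incl : Bool)
    (s₁ s₂ : List (Symb N T)) : Prop :=
  ∃ A x Per For u v, (A, x, Per, For) ∈ G.rules ∧
    s₁ = u ++ Sum.inl A :: v ∧ s₂ = u ++ x ++ v ∧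
    Per ⊆ alph (if incl then s₁ else u ++ v) ∧
    (∀ a ∈ For, a ∉ alph (if incl then s₁ else u ++ v))

/-- The language of a semi-conditional grammar. -/
def SCG.Lang {N T : Type} (G : SCG N T) (incl : Bool) : Set (List T) :=
  {w | Relation.ReflTransGen (G.Step incl) [Sum.inl G.start] (w.map Sum.inr)}

/-- The family SC(1,1): inclusive derivation definition (context `alph (uAv)`). -/
def SC11 (T : Type) : Set (Set (List T)) :=
  {L | ∃ (N : Type) (G : SCG N T), G.Lang true = L}

/-- The family SC'(1,1): exclusive derivation definition (context `alph (uv)`). -/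
def SC11' (T : Type) : Set (Set (List T)) :=
  {L | ∃ (N : Type) (G : SCG N T), G.Lang false = L}

/-!
Replace every production `(A → x, Per, For)` of `G` by the two productions `(A → A', ∅, N')`
and `(A' → x, Per, For)`, where `N'` is a set of fresh primed copies of the nonterminals.
Neither has its left-hand side in its forbidding set. Since the marking production forbids all
primed symbols, a sentential form of the new grammar contains at most one primed symbol, and it
is the image of a sentential form of `G` in which one occurrence `A` has been marked `A'`; the
only way to proceed with `A'` is to apply a production of `G` to that occurrence, under the very
same context conditions. So the new derivations are exactly those of `G` with every step split
in two.
-/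

@[simp] lemma mem_alph {α : Type} {a : α} {w : List α} : a ∈ alph w ↔ a ∈ w := Iff.rfl

namespace RCG

variable {N T : Type}

/-- The nonterminals of the new grammar are `N ⊕ N`, where `Sum.inr A` is the primed copy `A'`;
old symbols embed as the unprimed ones. -/
def embed : Symb N T → Symb (N ⊕ N) T := Sum.map Sum.inl id

@[simp] lemma embed_inl (A : N) : (embed (Sum.inl A) : Symb (N ⊕ N) T) = Sum.inl (Sum.inl A) := rfl

@[simp] lemma embed_inr (a : T) : (embed (Sum.inr a) : Symb (N ⊕ N) T) = Sum.inr a := rfl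

lemma embed_injective : Function.Injective (embed : Symb N T → Symb (N ⊕ N) T) :=
  Sum.map_injective.2 ⟨Sum.inl_injective, Function.injective_id⟩

@[simp] lemma inl_inl_mem_map_embed {B : N} {l : List (Symb N T)} :
    (Sum.inl (Sum.inl B) : Symb (N ⊕ N) T) ∈ l.map embed ↔ Sum.inl B ∈ l :=
  List.mem_map_of_injective (a := Sum.inl B) embed_injective

@[simp] lemma inl_inr_notMem_map_embed (A : N) (l : List (Symb N T)) :
    (Sum.inl (Sum.inr A) : Symb (N ⊕ N) T) ∉ l.map embed := by
  simp [embed]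

/-- `(A → A', ∅, N')` -/
def markRule (A : N) : (N ⊕ N) × List (Symb (N ⊕ N) T) × Set (N ⊕ N) × Set (N ⊕ N) :=
  (Sum.inl A, [Sum.inl (Sum.inr A)], ∅, Set.range Sum.inr)

/-- `(A' → x, Per, For)` -/
def rewriteRule (r : N × List (Symb N T) × Set N × Set N) :
    (N ⊕ N) × List (Symb (N ⊕ N) T) × Set (N ⊕ N) × Set (N ⊕ N) :=
  (Sum.inr r.1, r.2.1.map embed, Sum.inl '' r.2.2.1, Sum.inl '' r.2.2.2)

def withPrimes (G : RCG N T) : RCG (N ⊕ N) T where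
  rules := (fun r => markRule r.1) '' G.rules ∪ rewriteRule '' G.rules
  fin := (G.fin.image _).union (G.fin.image _)
  ne := by
    rintro _ (⟨r, -, rfl⟩ | ⟨r, hr, rfl⟩)
    · simp [markRule]
    · simpa [rewriteRule] using G.ne r hr
  start := Sum.inl G.start

lemma lhs_notMem_forbidding_withPrimes (G : RCG N T) :
    ∀ r ∈ G.withPrimes.rules, r.1 ∉ r.2.2.2 := by
  rintro _ (⟨r, -, rfl⟩ | ⟨r, -, rfl⟩) <;> simp [markRule, rewriteRule]

def Reachable (G : RCG N T) (s : List (Symb N T)) : Prop :=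
  Relation.ReflTransGen (G.Step false) [Sum.inl G.start] s

lemma mem_lang_false_iff {G : RCG N T} {w : List T} :
    w ∈ G.Lang false ↔ G.Reachable (w.map Sum.inr) :=
  Iff.rfl

variable {G : RCG N T}

lemma Step.map_embed {s₁ s₂ : List (Symb N T)} (h : G.Step false s₁ s₂) :
    Relation.ReflTransGen (G.withPrimes.Step false) (s₁.map embed) (s₂.map embed) := by
  obtain ⟨A, x, Per, For, u, v, hr, rfl, rfl, hPer, hFor⟩ := h
  have mark : G.withPrimes.Step false ((u ++ Sum.inl A :: v).map embed)
      (u.map embed ++ Sum.inl (Sum.inr A) :: v.map embed) :=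
    ⟨_, _, _, _, u.map embed, v.map embed, Or.inl ⟨_, hr, rfl⟩, by simp, by simp,
      by simp, by simp⟩
  have rewrite : G.withPrimes.Step false (u.map embed ++ Sum.inl (Sum.inr A) :: v.map embed)
      ((u ++ x ++ v).map embed) :=
    ⟨_, _, _, _, u.map embed, v.map embed, Or.inr ⟨_, hr, rfl⟩, rfl, by simp,
      by simpa [rewriteRule, -List.mem_map] using hPer,
      by simpa [rewriteRule, -List.mem_map] using hFor⟩
  exact .tail (.single mark) rewrite

def ReachableLift (G : RCG N T) (t : List (Symb (N ⊕ N) T)) : Prop :=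
  (∃ s, G.Reachable s ∧ t = s.map embed) ∨
  ∃ u A v, G.Reachable (u ++ Sum.inl A :: v) ∧
    t = u.map embed ++ Sum.inl (Sum.inr A) :: v.map embed

namespace ReachableLift

lemma mark {u' v' : List (Symb (N ⊕ N) T)} {A : N}
    (ht : ReachableLift G (u' ++ Sum.inl (Sum.inl A) :: v'))
    (hFor : ∀ B ∈ Set.range Sum.inr, (Sum.inl B : Symb (N ⊕ N) T) ∉ alph (u' ++ v')) :
    ReachableLift G (u' ++ [Sum.inl (Sum.inr A)] ++ v') := by
  rcases ht with ⟨s, hs, hts⟩ | ⟨u, A₀, v, -, ht⟩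
  · obtain ⟨u, _, rfl, rfl, hv⟩ := List.map_eq_append_iff.1 hts.symm
    obtain ⟨c, v, rfl, hc, rfl⟩ := List.map_eq_cons_iff.1 hv
    obtain rfl : c = Sum.inl A := embed_injective hc
    exact Or.inr ⟨u, A, v, hs, by simp⟩
  · -- the primed `A₀` already present is forbidden by the marking rule
    have : Sum.inl (Sum.inr A₀) ∈ u' ++ Sum.inl (Sum.inl A) :: v' := by rw [ht]; simp
    exact (hFor _ ⟨A₀, rfl⟩ (by simpa using this)).elim

lemma rewrite {u' v' : List (Symb (N ⊕ N) T)} {A : N} {x : List (Symb N T)} {Per For : Set N}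
    (hr : (A, x, Per, For) ∈ G.rules)
    (ht : ReachableLift G (u' ++ Sum.inl (Sum.inr A) :: v'))
    (hPer : ∀ B ∈ Sum.inl '' Per, (Sum.inl B : Symb (N ⊕ N) T) ∈ alph (u' ++ v'))
    (hFor : ∀ B ∈ Sum.inl '' For, (Sum.inl B : Symb (N ⊕ N) T) ∉ alph (u' ++ v')) :
    ReachableLift G (u' ++ x.map embed ++ v') := by
  rcases ht with ⟨s, -, hts⟩ | ⟨u, A₀, v, hs, ht⟩
  · exact absurd (hts ▸ by simp) (inl_inr_notMem_map_embed A s)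
  · obtain ⟨rfl, hA, rfl⟩ := (List.append_cons_inj_of_notMem
      (inl_inr_notMem_map_embed A u) (inl_inr_notMem_map_embed A v)).1 ht.symm
    obtain rfl : A = A₀ := by simpa using hA.symm
    refine Or.inl ⟨u ++ x ++ v, hs.tail ⟨A, x, Per, For, u, v, hr, rfl, rfl, ?_, ?_⟩, by simp⟩
    · simpa [-List.mem_map] using hPer
    · simpa [-List.mem_map] using hFor

lemma step {t t' : List (Symb (N ⊕ N) T)} (ht : ReachableLift G t)
    (h : G.withPrimes.Step false t t') : ReachableLift G t' := by
  obtain ⟨_, _, _, _, u', v', (⟨⟨A, x, Per, For⟩, hr, hrule⟩ | ⟨⟨A, x, Per, For⟩, hr, hrule⟩),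
    rfl, rfl, hPer, hFor⟩ := h <;> cases hrule
  · exact ht.mark hFor
  · exact ht.rewrite hr hPer hFor

end ReachableLift

lemma reachableLift_of_reachable {t : List (Symb (N ⊕ N) T)} (h : G.withPrimes.Reachable t) :
    ReachableLift G t := by
  induction h with
  | refl => exact Or.inl ⟨_, .refl, rfl⟩
  | tail _ hstep ih => exact ih.step hstep

lemma Reachable.map_embed {s : List (Symb N T)} (h : G.Reachable s) :
    G.withPrimes.Reachable (s.map embed) :=
  h.lift' (List.map embed) fun _ _ h => h.map_embed

theorem lang_withPrimes (G : RCG N T) : G.withPrimes.Lang false = G.Lang false := by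
  ext w
  rw [mem_lang_false_iff, mem_lang_false_iff]
  have hw : (w.map Sum.inr).map embed = (w.map Sum.inr : List (Symb (N ⊕ N) T)) := by
    simp [Function.comp_def]
  refine ⟨fun h => ?_, fun h => hw ▸ h.map_embed⟩
  rcases reachableLift_of_reachable h with ⟨s, hs, hws⟩ | ⟨u, A, v, -, hws⟩
  · rwa [← List.map_injective_iff.2 embed_injective (hws.symm.trans hw.symm)]
  · have : (Sum.inl (Sum.inr A) : Symb (N ⊕ N) T) ∈ w.map Sum.inr := hws ▸ by simp
    simp at this

end RCG

/-- every random context grammar has an equivalent one in which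
no production's left-hand side occurs in its own forbidding set. -/
theorem rc_no_self_forbidding (N T : Type) (G : RCG N T) :
    ∃ (N' : Type) (G' : RCG N' T),
      G'.Lang false = G.Lang false ∧
      ∀ r ∈ G'.rules, r.1 ∉ r.2.2.2 :=
  ⟨N ⊕ N, G.withPrimes, G.lang_withPrimes, G.lhs_notMem_forbidding_withPrimes⟩
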